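/- For any rotation cube with center r₀, the value E(R_{r₀}) is a lower bound on max_{r in cube} E(R_r), and the upper bound E_U from the relaxed threshold ε + μ satisfies E_U ≥ max_{r in cube} E(R_r) ≥ E(R_{r₀}); moreover as the cube side δ_r → 0 (so μ → 0), E_U − E(R_{r₀}) → 0 whenever no angle equals the threshold exactly. -/

import Mathlib

open Matrix

noncomputable def dot3 (u w : Fin 3 → ℝ) : ℝ := ∑ i, u i * w i

noncomputable def norm3 (u : Fin 3 → ℝ) : ℝ := Real.sqrt (dot3 u u)

/-- Angle between two vectors in ℝ³, in [0, π]. -/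
noncomputable def vangle (u w : Fin 3 → ℝ) : ℝ :=
  Real.arccos (dot3 u w / (norm3 u * norm3 w))

/-- Cross-product (skew-symmetric) matrix of a vector. -/
def crossMat (b : Fin 3 → ℝ) : Matrix (Fin 3) (Fin 3) ℝ :=
  !![0, -b 2, b 1; b 2, 0, -b 0; -b 1, b 0, 0]

/-- Rotation matrix of an axis-angle vector, via the matrix exponential. -/
noncomputable def axisAngleRot (a : Fin 3 → ℝ) : Matrix (Fin 3) (Fin 3) ℝ :=
  NormedSpace.exp (crossMat a)

/-- Inlier-counting objective: E(R) = Σ_j max_k ⟦|∠(n_j, R v_k) − π/2| ≤ ε⟧. -/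
noncomputable def inlierCount {J K : ℕ} (n : Fin J → Fin 3 → ℝ) (v : Fin K → Fin 3 → ℝ)
    (R : Matrix (Fin 3) (Fin 3) ℝ) (ε : ℝ) : ℕ :=
  ∑ j, Finset.univ.sup fun k => if |vangle (n j) (R.mulVec (v k)) - Real.pi / 2| ≤ ε then 1 else 0

/-!
The lower bound holds because `r₀` lies in its own cube. For the upper bound, replacing `R_{r₀}`
by `R_r` moves every `R v_k` by an angle at most `‖r - r₀‖ ≤ √3 δ / 2` (and at most `π`), so an
inlier of `R_r` at threshold `ε` is an inlier of `R_{r₀}` at threshold `ε + μ`.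

The angle bound holds for the exponentials of any two skew-adjoint operators `a`, `b`: write
`exp a = (exp (a / N)) ^ N`; the factors are isometries, each step moves a unit vector along a
chord of length at most `exp (K / N) ‖a - b‖ / N`, and the angle exceeds the chord only by a cubic
term, so the total angle is `‖a - b‖ + O(1 / N)`.

If no angle sits exactly at the threshold, the inlier count is locally constant in the threshold,
which gives the convergence as `μ → 0`.
-/

open NormedSpace InnerProductGeometry WithLp Filter Topology

section ExpLipschitz

variable {𝔸 : Type*} [NormedRing 𝔸]

theorem norm_pow_succ_sub_pow_succ_le {a b : 𝔸} {K : ℝ} (ha : ‖a‖ ≤ K) (hb : ‖b‖ ≤ K) (n : ℕ) :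
    ‖a ^ (n + 1) - b ^ (n + 1)‖ ≤ (n + 1) * K ^ n * ‖a - b‖ := by
  induction n with
  | zero => simp
  | succ n ih =>
    have hsplit : a ^ (n + 2) - b ^ (n + 2) =
        a * (a ^ (n + 1) - b ^ (n + 1)) + (a - b) * b ^ (n + 1) := by
      rw [pow_succ' a (n + 1), pow_succ' b (n + 1), mul_sub, sub_mul]; abel
    have hbpow : ‖b ^ (n + 1)‖ ≤ K ^ (n + 1) :=
      (norm_pow_le' b n.succ_pos).trans (pow_le_pow_left₀ (norm_nonneg b) hb _)
    calc ‖a ^ (n + 2) - b ^ (n + 2)‖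
        ≤ ‖a‖ * ‖a ^ (n + 1) - b ^ (n + 1)‖ + ‖a - b‖ * ‖b ^ (n + 1)‖ := by
          rw [hsplit]
          exact (norm_add_le _ _).trans (add_le_add (norm_mul_le _ _) (norm_mul_le _ _))
      _ ≤ K * ((n + 1) * K ^ n * ‖a - b‖) + ‖a - b‖ * K ^ (n + 1) := by
          have hK : 0 ≤ K := (norm_nonneg a).trans ha
          gcongr
      _ = (↑(n + 1) + 1) * K ^ (n + 1) * ‖a - b‖ := by push_cast; ring

variable [NormedAlgebra ℝ 𝔸] [CompleteSpace 𝔸]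

theorem norm_exp_sub_exp_le {a b : 𝔸} {K : ℝ} (ha : ‖a‖ ≤ K) (hb : ‖b‖ ≤ K) :
    ‖exp a - exp b‖ ≤ Real.exp K * ‖a - b‖ := by
  have hdiff : HasSum (fun n : ℕ => ((n + 1).factorial : ℝ)⁻¹ • (a ^ (n + 1) - b ^ (n + 1)))
      (exp a - exp b) := by
    have h := (exp_series_hasSum_exp' (𝕂 := ℝ) a).sub (exp_series_hasSum_exp' (𝕂 := ℝ) b)
    rw [← hasSum_nat_add_iff' 1] at h
    simpa [smul_sub] using h
  have hmajor : HasSum (fun n : ℕ => K ^ n / n.factorial * ‖a - b‖) (Real.exp K * ‖a - b‖) := by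
    rw [Real.exp_eq_exp_ℝ]
    exact (expSeries_div_hasSum_exp K).mul_right _
  refine hdiff.norm_le_of_bounded hmajor fun n => ?_
  rw [norm_smul, Real.norm_of_nonneg (by positivity)]
  calc ((n + 1).factorial : ℝ)⁻¹ * ‖a ^ (n + 1) - b ^ (n + 1)‖
      ≤ ((n + 1).factorial : ℝ)⁻¹ * ((n + 1) * K ^ n * ‖a - b‖) := by
        gcongr; exact norm_pow_succ_sub_pow_succ_le ha hb n
    _ = K ^ n / n.factorial * ‖a - b‖ := by
        rw [Nat.factorial_succ]; push_cast; field_simp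

end ExpLipschitz

section Angle

variable {H : Type*} [NormedAddCommGroup H] [InnerProductSpace ℝ H]

theorem abs_angle_sub_angle_le (x y z : H) : |angle x y - angle x z| ≤ angle y z := by
  have h₁ := angle_le_angle_add_angle x z y
  have h₂ := angle_le_angle_add_angle x y z
  rw [angle_comm z y] at h₁
  exact abs_sub_le_iff.mpr ⟨by linarith, by linarith⟩

theorem angle_le_norm_sub_add_norm_sub_pow_three {x y : H} (hx : ‖x‖ = 1) (hy : ‖y‖ = 1) :
    angle x y ≤ ‖x - y‖ + ‖x - y‖ ^ 3 := by
  set t := angle x y / 2 with ht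
  have ht₀ : 0 ≤ t := div_nonneg (angle_nonneg x y) two_pos.le
  have htπ : t ≤ Real.pi / 2 := by linarith [angle_le_pi x y]
  have hsin : 0 ≤ Real.sin t := Real.sin_nonneg_of_nonneg_of_le_pi ht₀ (by linarith [Real.pi_pos])
  have hchord : ‖x - y‖ = 2 * Real.sin t := by
    have hcos := norm_sub_sq_eq_norm_sq_add_norm_sq_sub_two_mul_norm_mul_norm_mul_cos_angle x y
    have hhalf : Real.cos (angle x y) = 1 - 2 * Real.sin t ^ 2 := by
      rw [show angle x y = 2 * t by ring, Real.cos_two_mul', Real.cos_sq']; ring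
    rw [hx, hy, hhalf] at hcos
    nlinarith [norm_nonneg (x - y)]
  -- Jordan's inequality gives `t ≤ ‖x - y‖`, and then `sin t ≥ t - t³/6` gives the cubic error
  have hjordan : t ≤ ‖x - y‖ := by
    have hπ := Real.pi_lt_four
    calc t = Real.pi / 2 * (2 / Real.pi * t) := by field_simp
      _ ≤ Real.pi / 2 * Real.sin t := by gcongr; exact Real.mul_le_sin ht₀ htπ
      _ ≤ ‖x - y‖ := by rw [hchord]; nlinarith
  have hcube := Real.sin_ge_sub_cube ht₀
  have ht3 : t ^ 3 ≤ ‖x - y‖ ^ 3 := pow_le_pow_left₀ ht₀ hjordan 3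
  linarith [pow_nonneg (norm_nonneg (x - y)) 3]

end Angle

section Unitary

variable {H : Type*} [NormedAddCommGroup H] [InnerProductSpace ℝ H] [CompleteSpace H]

theorem angle_map_of_mem_unitary {u : H →L[ℝ] H} (hu : u ∈ unitary (H →L[ℝ] H)) (x y : H) :
    angle (u x) (u y) = angle x y := by
  simp only [angle, u.inner_map_map_of_mem_unitary hu, u.norm_map_of_mem_unitary hu]

theorem angle_pow_apply_le {u w : H →L[ℝ] H} (hu : u ∈ unitary (H →L[ℝ] H))
    (hw : w ∈ unitary (H →L[ℝ] H)) {c : ℝ} (hstep : ∀ y, ‖y‖ = 1 → angle (u y) (w y) ≤ c)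
    {x : H} (hx : ‖x‖ = 1) (n : ℕ) : angle ((u ^ n) x) ((w ^ n) x) ≤ n * c := by
  induction n with
  | zero => simp [angle_self (norm_ne_zero_iff.mp (hx.trans_ne one_ne_zero))]
  | succ n ih =>
    have hwn : ‖(w ^ n) x‖ = 1 := ((w ^ n).norm_map_of_mem_unitary (pow_mem hw n) x).trans hx
    calc angle ((u ^ (n + 1)) x) ((w ^ (n + 1)) x)
        ≤ angle (u ((u ^ n) x)) (u ((w ^ n) x)) + angle (u ((w ^ n) x)) (w ((w ^ n) x)) := by
          rw [pow_succ', pow_succ', mul_apply_eq_comp, mul_apply_eq_comp]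
          exact angle_le_angle_add_angle _ _ _
      _ ≤ n * c + c := by
          rw [angle_map_of_mem_unitary hu]
          exact add_le_add ih (hstep _ hwn)
      _ = (↑(n + 1) : ℝ) * c := by push_cast; ring

theorem angle_exp_apply_le_of_norm_le {a b : H →L[ℝ] H} (ha : a ∈ skewAdjoint (H →L[ℝ] H))
    (hb : b ∈ skewAdjoint (H →L[ℝ] H)) {K : ℝ} (haK : ‖a‖ ≤ K) (hbK : ‖b‖ ≤ K)
    {x : H} (hx : ‖x‖ = 1) :
    angle (exp a x) (exp b x) ≤ Real.exp K * ‖a - b‖ + (Real.exp K * ‖a - b‖) ^ 3 := by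
  -- Mathlib states `exp_mem_unitary_of_mem_skewAdjoint` and `exp_nsmul` for normed `ℚ`-algebras
  let : NormedAlgebra ℚ (H →L[ℝ] H) := .restrictScalars ℚ ℝ _
  have hax : ‖exp a x‖ = 1 :=
    ((exp a).norm_map_of_mem_unitary (exp_mem_unitary_of_mem_skewAdjoint ha) x).trans hx
  have hbx : ‖exp b x‖ = 1 :=
    ((exp b).norm_map_of_mem_unitary (exp_mem_unitary_of_mem_skewAdjoint hb) x).trans hx
  have hchord : ‖exp a x - exp b x‖ ≤ Real.exp K * ‖a - b‖ :=
    calc ‖exp a x - exp b x‖ = ‖(exp a - exp b) x‖ := by rw [_root_.sub_apply]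
      _ ≤ ‖exp a - exp b‖ * ‖x‖ := (exp a - exp b).le_opNorm x
      _ = ‖exp a - exp b‖ := by rw [hx, mul_one]
      _ ≤ Real.exp K * ‖a - b‖ := norm_exp_sub_exp_le haK hbK
  have hchord₀ := norm_nonneg (exp a x - exp b x)
  calc angle (exp a x) (exp b x) ≤ ‖exp a x - exp b x‖ + ‖exp a x - exp b x‖ ^ 3 :=
        angle_le_norm_sub_add_norm_sub_pow_three hax hbx
    _ ≤ Real.exp K * ‖a - b‖ + (Real.exp K * ‖a - b‖) ^ 3 := by gcongr

theorem angle_exp_apply_le {a b : H →L[ℝ] H} (ha : a ∈ skewAdjoint (H →L[ℝ] H))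
    (hb : b ∈ skewAdjoint (H →L[ℝ] H)) {x : H} (hx : ‖x‖ = 1) :
    angle (exp a x) (exp b x) ≤ ‖a - b‖ := by
  set K := max ‖a‖ ‖b‖
  set d := ‖a - b‖
  -- `g N⁻¹` bounds the sum of the step angles of `exp a = exp (a / N) ^ N` and tends to `d`
  let g : ℝ → ℝ := fun s => Real.exp (K * s) * d + (Real.exp (K * s) * d) ^ 3 * s ^ 2
  have hg : Tendsto (fun N : ℕ => g (N : ℝ)⁻¹) atTop (𝓝 d) := by
    have hg₀ : g 0 = d := by simp [g]
    rw [← hg₀]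
    exact ((by fun_prop : Continuous g).tendsto 0).comp tendsto_inv_atTop_nhds_zero_nat
  refine ge_of_tendsto hg (eventually_atTop.2 ⟨1, fun N hN => ?_⟩)
  set s : ℝ := (N : ℝ)⁻¹
  have hs : 0 ≤ s := by positivity
  have hNs : (N : ℝ) * s = 1 := mul_inv_cancel₀ (by positivity)
  let : NormedAlgebra ℚ (H →L[ℝ] H) := .restrictScalars ℚ ℝ _
  have hpow : ∀ c : H →L[ℝ] H, exp c = exp (s • c) ^ N := fun c => by
    rw [← NormedSpace.exp_nsmul, ← Nat.cast_smul_eq_nsmul ℝ, smul_smul, hNs, one_smul]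
  have hsa := skewAdjoint.smul_mem s ha
  have hsb := skewAdjoint.smul_mem s hb
  have hstep : ∀ y : H, ‖y‖ = 1 → angle (exp (s • a) y) (exp (s • b) y) ≤
      Real.exp (K * s) * (s * d) + (Real.exp (K * s) * (s * d)) ^ 3 := by
    intro y hy
    have hnorm : ∀ c : H →L[ℝ] H, ‖c‖ ≤ K → ‖s • c‖ ≤ K * s := fun c hc => by
      rw [norm_smul, Real.norm_of_nonneg hs, mul_comm]; gcongr
    simpa only [← smul_sub, norm_smul, Real.norm_of_nonneg hs] using
      angle_exp_apply_le_of_norm_le hsa hsb (hnorm a (le_max_left _ _))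
        (hnorm b (le_max_right _ _)) hy
  have hua : exp (s • a) ∈ unitary (H →L[ℝ] H) := exp_mem_unitary_of_mem_skewAdjoint hsa
  have hub : exp (s • b) ∈ unitary (H →L[ℝ] H) := exp_mem_unitary_of_mem_skewAdjoint hsb
  calc angle (exp a x) (exp b x) = angle ((exp (s • a) ^ N) x) ((exp (s • b) ^ N) x) := by
        rw [← hpow, ← hpow]
    _ ≤ N * (Real.exp (K * s) * (s * d) + (Real.exp (K * s) * (s * d)) ^ 3) :=
        angle_pow_apply_le hua hub hstep hx N
    _ = g s := by
        linear_combination (Real.exp (K * s) * d + (Real.exp (K * s) * d) ^ 3 * s ^ 2) * hNs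

end Unitary

theorem EuclideanSpace.norm_le_sqrt_card_mul {ι : Type*} [Fintype ι] {x : EuclideanSpace ℝ ι}
    {c : ℝ} (hc : 0 ≤ c) (h : ∀ i, |x i| ≤ c) : ‖x‖ ≤ √(Fintype.card ι) * c := by
  rw [EuclideanSpace.norm_eq, ← Real.sqrt_sq hc, ← Real.sqrt_mul (Nat.cast_nonneg _)]
  refine Real.sqrt_le_sqrt ?_
  calc ∑ i, ‖x i‖ ^ 2 ≤ ∑ _i : ι, c ^ 2 := by
        gcongr with i; rw [Real.norm_eq_abs]; exact h i
    _ = Fintype.card ι * c ^ 2 := by simp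

theorem dot3_eq_inner (u w : Fin 3 → ℝ) : dot3 u w = inner ℝ (toLp 2 u) (toLp 2 w) := by
  rw [EuclideanSpace.inner_toLp_toLp, dot3, dotProduct]
  simp [mul_comm]

theorem dot3_eq_dotProduct (u w : Fin 3 → ℝ) : dot3 u w = u ⬝ᵥ w := rfl

theorem norm3_eq_norm (u : Fin 3 → ℝ) : norm3 u = ‖toLp 2 u‖ := by
  rw [norm3, dot3_eq_inner, real_inner_self_eq_norm_sq, Real.sqrt_sq (norm_nonneg _)]

theorem vangle_eq_angle (u w : Fin 3 → ℝ) : vangle u w = angle (toLp 2 u) (toLp 2 w) := by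
  rw [vangle, angle, dot3_eq_inner, norm3_eq_norm, norm3_eq_norm]

theorem crossMat_mulVec (a w : Fin 3 → ℝ) : crossMat a *ᵥ w = a ⨯₃ w := by
  ext i
  fin_cases i <;> simp [crossMat, cross_apply, mulVec, dotProduct, Fin.sum_univ_three] <;> ring

theorem crossMat_sub (x y : Fin 3 → ℝ) : crossMat (x - y) = crossMat x - crossMat y := by
  ext i j
  fin_cases i <;> fin_cases j <;> simp [crossMat] <;> ring

theorem crossMat_transpose (a : Fin 3 → ℝ) : (crossMat a)ᵀ = -crossMat a := by
  ext i j
  fin_cases i <;> fin_cases j <;> simp [crossMat]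

theorem norm_cross_le (a w : Fin 3 → ℝ) : ‖toLp 2 (a ⨯₃ w)‖ ≤ ‖toLp 2 a‖ * ‖toLp 2 w‖ := by
  simp only [← norm3_eq_norm, norm3, dot3_eq_dotProduct]
  have ha : 0 ≤ a ⬝ᵥ a := Finset.sum_nonneg fun i _ => mul_self_nonneg (a i)
  rw [← Real.sqrt_mul ha]
  refine Real.sqrt_le_sqrt ?_
  rw [cross_dot_cross, dotProduct_comm w a]
  nlinarith [sq_nonneg (a ⬝ᵥ w)]

theorem toEuclideanCLM_crossMat_mem_skewAdjoint (a : Fin 3 → ℝ) :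
    toEuclideanCLM (𝕜 := ℝ) (crossMat a) ∈
      skewAdjoint (EuclideanSpace ℝ (Fin 3) →L[ℝ] EuclideanSpace ℝ (Fin 3)) := by
  rw [skewAdjoint.mem_iff, ← map_star, star_eq_conjTranspose,
    conjTranspose_eq_transpose_of_trivial, crossMat_transpose, map_neg]

theorem norm_toEuclideanCLM_crossMat_le (a : Fin 3 → ℝ) :
    ‖toEuclideanCLM (𝕜 := ℝ) (crossMat a)‖ ≤ ‖toLp 2 a‖ :=
  ContinuousLinearMap.opNorm_le_bound _ (norm_nonneg _) fun w => by
    rw [← toLp_ofLp 2 w, toEuclideanCLM_toLp, crossMat_mulVec]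
    exact norm_cross_le a (ofLp w)

open scoped Matrix.Norms.L2Operator in
theorem toEuclideanCLM_axisAngleRot (a : Fin 3 → ℝ) :
    toEuclideanCLM (𝕜 := ℝ) (axisAngleRot a) = exp (toEuclideanCLM (𝕜 := ℝ) (crossMat a)) := by
  let : NormedAlgebra ℚ (Matrix (Fin 3) (Fin 3) ℝ) := .restrictScalars ℚ ℝ _
  exact map_exp (toEuclideanCLM (𝕜 := ℝ) (n := Fin 3)) (LinearMap.continuous_of_finiteDimensional
    (toEuclideanCLM (𝕜 := ℝ) (n := Fin 3)).toAlgEquiv.toLinearEquiv.toLinearMap) _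

theorem vangle_axisAngleRot_mulVec_le (x y : Fin 3 → ℝ) {v : Fin 3 → ℝ} (hv : norm3 v = 1) :
    vangle (axisAngleRot x *ᵥ v) (axisAngleRot y *ᵥ v) ≤ norm3 (x - y) := by
  rw [vangle_eq_angle, norm3_eq_norm, ← toEuclideanCLM_toLp, ← toEuclideanCLM_toLp,
    toEuclideanCLM_axisAngleRot, toEuclideanCLM_axisAngleRot]
  refine (angle_exp_apply_le (toEuclideanCLM_crossMat_mem_skewAdjoint x)
    (toEuclideanCLM_crossMat_mem_skewAdjoint y) (by rwa [← norm3_eq_norm])).trans ?_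
  rw [← map_sub, ← crossMat_sub]
  exact norm_toEuclideanCLM_crossMat_le _

theorem abs_vangle_sub_vangle_le (u w z : Fin 3 → ℝ) : |vangle u w - vangle u z| ≤ vangle w z := by
  simpa only [vangle_eq_angle] using abs_angle_sub_angle_le (toLp 2 u) (toLp 2 w) (toLp 2 z)

theorem abs_vangle_axisAngleRot_sub_le (u : Fin 3 → ℝ) {w : Fin 3 → ℝ} (hw : norm3 w = 1)
    {r r₀ : Fin 3 → ℝ} {δ : ℝ} (hδ : 0 ≤ δ) (hr : ∀ i, |r i - r₀ i| ≤ δ / 2) :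
    |vangle u (axisAngleRot r *ᵥ w) - vangle u (axisAngleRot r₀ *ᵥ w)| ≤
      min (√3 * δ / 2) Real.pi := by
  have hcube : norm3 (r - r₀) ≤ √3 * δ / 2 := by
    simpa [norm3_eq_norm, mul_div_assoc] using
      EuclideanSpace.norm_le_sqrt_card_mul (x := toLp 2 (r - r₀)) (by positivity) hr
  refine le_min ?_ (abs_sub_le_of_nonneg_of_le (Real.arccos_nonneg _) (Real.arccos_le_pi _)
    (Real.arccos_nonneg _) (Real.arccos_le_pi _))
  exact (abs_vangle_sub_vangle_le _ _ _).trans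
    ((vangle_axisAngleRot_mulVec_le r r₀ hw).trans hcube)

theorem eventually_le_add_iff_le {a ε : ℝ} (h : a ≠ ε) : ∀ᶠ η in 𝓝 0, (a ≤ ε + η ↔ a ≤ ε) := by
  rcases h.lt_or_gt with hlt | hgt
  · filter_upwards [eventually_gt_nhds (sub_neg.2 hlt)] with η hη
    exact iff_of_true (by linarith) hlt.le
  · filter_upwards [eventually_lt_nhds (sub_pos.2 hgt)] with η hη
    exact iff_of_false (by linarith) (not_le.2 hgt)

section InlierCount

variable {J K : ℕ} (n : Fin J → Fin 3 → ℝ) (v : Fin K → Fin 3 → ℝ)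

theorem inlierCount_le_card (R : Matrix (Fin 3) (Fin 3) ℝ) (ε : ℝ) : inlierCount n v R ε ≤ J :=
  calc inlierCount n v R ε ≤ ∑ _j : Fin J, 1 :=
        Finset.sum_le_sum fun j _ => Finset.sup_le fun k _ => by split_ifs <;> simp
    _ = J := by simp

theorem inlierCount_le_inlierCount_add {R R₀ : Matrix (Fin 3) (Fin 3) ℝ} {ε μ : ℝ}
    (h : ∀ j k, |vangle (n j) (R *ᵥ v k) - vangle (n j) (R₀ *ᵥ v k)| ≤ μ) :
    inlierCount n v R ε ≤ inlierCount n v R₀ (ε + μ) :=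
  Finset.sum_le_sum fun j _ => Finset.sup_mono_fun fun k _ => by
    have hmono : |vangle (n j) (R *ᵥ v k) - Real.pi / 2| ≤ ε →
        |vangle (n j) (R₀ *ᵥ v k) - Real.pi / 2| ≤ ε + μ := fun hε => by
      have hjk := h j k
      rw [abs_sub_comm] at hjk
      linarith [abs_sub_le (vangle (n j) (R₀ *ᵥ v k)) (vangle (n j) (R *ᵥ v k)) (Real.pi / 2)]
    split_ifs <;> simp_all

theorem eventually_inlierCount_add_eq {R : Matrix (Fin 3) (Fin 3) ℝ} {ε : ℝ}
    (h : ∀ j k, |vangle (n j) (R *ᵥ v k) - Real.pi / 2| ≠ ε) :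
    ∀ᶠ η in 𝓝 0, inlierCount n v R (ε + η) = inlierCount n v R ε := by
  filter_upwards [eventually_all.2 fun j => eventually_all.2 fun k =>
    eventually_le_add_iff_le (h j k)] with η hη
  simp only [inlierCount, hη]

end InlierCount

theorem bnb_bounds_and_convergence_general {J K : ℕ} (n : Fin J → Fin 3 → ℝ) (v : Fin K → Fin 3 → ℝ)
    (hv : ∀ k, norm3 (v k) = 1)
    (ε : ℝ) (r₀ : Fin 3 → ℝ) :
    (∀ δ : ℝ, 0 ≤ δ →
      inlierCount n v (axisAngleRot r₀) ε ≤
        sSup {m : ℕ | ∃ r : Fin 3 → ℝ, (∀ i, |r i - r₀ i| ≤ δ / 2) ∧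
          m = inlierCount n v (axisAngleRot r) ε} ∧
      sSup {m : ℕ | ∃ r : Fin 3 → ℝ, (∀ i, |r i - r₀ i| ≤ δ / 2) ∧
          m = inlierCount n v (axisAngleRot r) ε} ≤
        inlierCount n v (axisAngleRot r₀) (ε + min (Real.sqrt 3 * δ / 2) Real.pi)) ∧
    ((∀ (j : Fin J) (k : Fin K),
        |vangle (n j) ((axisAngleRot r₀).mulVec (v k)) - Real.pi / 2| ≠ ε) →
      Filter.Tendsto
        (fun δ : ℝ =>
          ((inlierCount n v (axisAngleRot r₀) (ε + min (Real.sqrt 3 * δ / 2) Real.pi) : ℝ) -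
            (inlierCount n v (axisAngleRot r₀) ε : ℝ)))
        (nhdsWithin 0 (Set.Ioi 0)) (nhds 0)) := by
  refine ⟨fun δ hδ => ?_, fun hne => ?_⟩
  · have hmem : inlierCount n v (axisAngleRot r₀) ε ∈ {m : ℕ | ∃ r : Fin 3 → ℝ,
        (∀ i, |r i - r₀ i| ≤ δ / 2) ∧ m = inlierCount n v (axisAngleRot r) ε} :=
      ⟨r₀, fun i => by simpa using div_nonneg hδ two_pos.le, rfl⟩
    have hbdd : BddAbove {m : ℕ | ∃ r : Fin 3 → ℝ,
        (∀ i, |r i - r₀ i| ≤ δ / 2) ∧ m = inlierCount n v (axisAngleRot r) ε} :=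
      ⟨J, by rintro _ ⟨r, -, rfl⟩; exact inlierCount_le_card n v _ ε⟩
    exact ⟨le_csSup hbdd hmem, csSup_le ⟨_, hmem⟩ fun _ ⟨r, hr, hm⟩ =>
      hm ▸ inlierCount_le_inlierCount_add n v fun j k =>
        abs_vangle_axisAngleRot_sub_le (n j) (hv k) hδ hr⟩
  · have hμ : Tendsto (fun δ : ℝ => min (√3 * δ / 2) Real.pi) (𝓝[>] 0) (𝓝 0) := by
      refine tendsto_nhdsWithin_of_tendsto_nhds ?_
      simpa [Real.pi_pos.le] using
        ((by fun_prop : Continuous fun δ : ℝ => min (√3 * δ / 2) Real.pi).tendsto 0)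
    refine tendsto_const_nhds.congr' ?_
    filter_upwards [hμ.eventually (eventually_inlierCount_add_eq n v hne)] with δ hδ
    rw [hδ, sub_self]

/-- BnB bounds sandwich the in-cube maximum, and the gap vanishes as the cube shrinks:
E(R_{r₀}) ≤ max over the cube of E(R_r) ≤ E_U, and if no angle hits the threshold ε
exactly, then E_U − E(R_{r₀}) → 0 as the cube side δ → 0⁺. -/
theorem bnb_bounds_and_convergence {J K : ℕ} (n : Fin J → Fin 3 → ℝ) (v : Fin K → Fin 3 → ℝ)
    (hn : ∀ j, norm3 (n j) = 1) (hv : ∀ k, norm3 (v k) = 1)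
    (ε : ℝ) (hε : 0 ≤ ε) (r₀ : Fin 3 → ℝ) :
    (∀ δ : ℝ, 0 ≤ δ →
      inlierCount n v (axisAngleRot r₀) ε ≤
        sSup {m : ℕ | ∃ r : Fin 3 → ℝ, (∀ i, |r i - r₀ i| ≤ δ / 2) ∧
          m = inlierCount n v (axisAngleRot r) ε} ∧
      sSup {m : ℕ | ∃ r : Fin 3 → ℝ, (∀ i, |r i - r₀ i| ≤ δ / 2) ∧
          m = inlierCount n v (axisAngleRot r) ε} ≤
        inlierCount n v (axisAngleRot r₀) (ε + min (Real.sqrt 3 * δ / 2) Real.pi)) ∧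
    ((∀ (j : Fin J) (k : Fin K),
        |vangle (n j) ((axisAngleRot r₀).mulVec (v k)) - Real.pi / 2| ≠ ε) →
      Filter.Tendsto
        (fun δ : ℝ =>
          ((inlierCount n v (axisAngleRot r₀) (ε + min (Real.sqrt 3 * δ / 2) Real.pi) : ℝ) -
            (inlierCount n v (axisAngleRot r₀) ε : ℝ)))
        (nhdsWithin 0 (Set.Ioi 0)) (nhds 0)) :=
  bnb_bounds_and_convergence_general n v hv ε r₀
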